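/- Set v₁ := −√(1 + 2√2) + (1/2)·∫ from 0 to π/4 of √((π√2)/(4x) + 1 + √2) dx, a₅ := 1 + 2/√(2 + √2) and a₆ := (π/8)/sin(π/8). Then v₁ + (1/2)·∫ from 0 to π/8 of √(a₆/x + a₅) dx < −0.05. In particular, in the Newtonian planar dihedral problem the continuation through the double collision at θ = π/2 of the right unstable branch of W^u(c₋) still has v < 0 at θ = 3π/8. -/
import Mathlib


open Real MeasureTheory

lemma sqrt_div_integral_bound (c b T : ℝ) (hc : 0 < c) (hb : 0 < b) (hT : 0 < T) :
    ∫ x in (0:ℝ)..T, Real.sqrt (c / x + b) ≤ 2 * Real.sqrt (T * (c + b * T / 3)) := by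
  have hrpos : 0 < Real.sqrt (c + b * T / 3) := Real.sqrt_pos.mpr (by positivity)
  set r : ℝ := Real.sqrt (c + b * T / 3) with hrdef
  have hr2 : r ^ 2 = c + b * T / 3 := Real.sq_sqrt (by positivity)
  have hrne : r ≠ 0 := ne_of_gt hrpos
  set A : ℝ := (2 * c + b * T / 3) / (2 * r) with hAdef
  set B : ℝ := b / (2 * r) with hBdef
  set f : ℝ → ℝ := fun x => Real.sqrt (c / x + b) with hfdef
  set g : ℝ → ℝ := fun x => A * x ^ (-(1/2) : ℝ) + B * x ^ ((1/2) : ℝ) with hgdef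
  have hgi : IntervalIntegrable g volume 0 T :=
    ((intervalIntegral.intervalIntegrable_rpow' (by norm_num)).const_mul A).add
      ((intervalIntegral.intervalIntegrable_rpow' (by norm_num)).const_mul B)
  have hpt : ∀ x ∈ Set.Ioc (0:ℝ) T, f x ≤ g x := by
    intro x hx
    obtain ⟨hx0, hxT⟩ := hx
    have hsx : 0 < Real.sqrt x := Real.sqrt_pos.mpr hx0
    have hsq : Real.sqrt (c + b * x) ^ 2 = c + b * x := Real.sq_sqrt (by positivity)
    have h3 : Real.sqrt (c + b * x) ≤ (2 * c + b * T / 3 + b * x) / (2 * r) := by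
      rw [le_div_iff₀ (by positivity)]
      nlinarith [sq_nonneg (Real.sqrt (c + b * x) - r), hsq, hr2, hrpos,
        Real.sqrt_nonneg (c + b * x)]
    have e1 : x ^ (-(1/2) : ℝ) = 1 / Real.sqrt x := by
      rw [Real.rpow_neg hx0.le, Real.sqrt_eq_rpow]; ring
    have e2 : x ^ ((1/2) : ℝ) = Real.sqrt x := (Real.sqrt_eq_rpow x).symm
    have h6 : (2 * c + b * T / 3 + b * x) / (2 * r) = A + B * x := by
      rw [hAdef, hBdef]; field_simp
    show Real.sqrt (c / x + b) ≤ A * x ^ (-(1/2) : ℝ) + B * x ^ ((1/2) : ℝ)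
    rw [e1, e2]
    calc Real.sqrt (c / x + b) = Real.sqrt (c + b * x) / Real.sqrt x := by
          rw [show c / x + b = (c + b * x) / x by field_simp,
            Real.sqrt_div (by positivity)]
      _ ≤ ((2 * c + b * T / 3 + b * x) / (2 * r)) / Real.sqrt x := by gcongr
      _ = (A + B * x) / Real.sqrt x := by rw [h6]
      _ = A * (1 / Real.sqrt x) + B * (x / Real.sqrt x) := by
          rw [add_div, mul_div_assoc]; ring
      _ = A * (1 / Real.sqrt x) + B * Real.sqrt x := by rw [Real.div_sqrt]
  have hgIoc : IntegrableOn g (Set.Ioc 0 T) :=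
    (intervalIntegrable_iff_integrableOn_Ioc_of_le hT.le).mp hgi
  have hfm : Measurable f :=
    Measurable.sqrt ((measurable_const.div measurable_id).add_const b)
  have hfIoc : IntegrableOn f (Set.Ioc 0 T) := by
    refine hgIoc.mono' hfm.aestronglyMeasurable ?_
    rw [ae_restrict_iff' measurableSet_Ioc]
    filter_upwards with x hx
    rw [Real.norm_eq_abs, abs_of_nonneg (Real.sqrt_nonneg _)]
    exact hpt x hx
  have hmono : ∫ x in (0:ℝ)..T, f x ≤ ∫ x in (0:ℝ)..T, g x := by
    rw [intervalIntegral.integral_of_le hT.le, intervalIntegral.integral_of_le hT.le]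
    exact setIntegral_mono_on hfIoc hgIoc measurableSet_Ioc hpt
  have i1 : ∫ x in (0:ℝ)..T, x ^ (-(1/2) : ℝ) = 2 * Real.sqrt T := by
    rw [integral_rpow (Or.inl (by norm_num)),
      show (-(1/2 : ℝ) + 1) = 1/2 by norm_num,
      Real.zero_rpow (by norm_num), Real.sqrt_eq_rpow]
    ring
  have i2 : ∫ x in (0:ℝ)..T, x ^ ((1/2) : ℝ) = (2/3) * (T * Real.sqrt T) := by
    rw [integral_rpow (Or.inl (by norm_num)),
      show ((1/2 : ℝ) + 1) = 1 + 1/2 by norm_num,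
      Real.zero_rpow (by norm_num), Real.rpow_add hT, Real.rpow_one, ← Real.sqrt_eq_rpow]
    ring
  have hgval : ∫ x in (0:ℝ)..T, g x = 2 * (Real.sqrt T * r) := by
    rw [hgdef]
    rw [intervalIntegral.integral_add
        ((intervalIntegral.intervalIntegrable_rpow' (by norm_num)).const_mul A)
        ((intervalIntegral.intervalIntegrable_rpow' (by norm_num)).const_mul B),
      intervalIntegral.integral_const_mul, intervalIntegral.integral_const_mul, i1, i2,
      hAdef, hBdef]
    have hc' : c = r ^ 2 - b * T / 3 := by linarith [hr2]
    rw [hc']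
    field_simp
    ring
  calc ∫ x in (0:ℝ)..T, f x ≤ ∫ x in (0:ℝ)..T, g x := hmono
    _ = 2 * (Real.sqrt T * r) := hgval
    _ = 2 * Real.sqrt (T * (c + b * T / 3)) := by
        rw [Real.sqrt_mul hT.le]

/-- With `v₁ = −√(1+2√2) + (1/2)∫₀^{π/4} √((π√2)/(4x) + 1 + √2) dx`,
`a₅ = 1 + 2/√(2+√2)` and `a₆ = (π/8)/sin(π/8)`, one has
`v₁ + (1/2)∫₀^{π/8} √(a₆/x + a₅) dx < −0.05`. -/
theorem newtonian_planar_continuation_neg :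
    (-Real.sqrt (1 + 2 * Real.sqrt 2) +
        (1/2) * ∫ x in (0:ℝ)..(π/4), Real.sqrt (π * Real.sqrt 2 / (4 * x) + 1 + Real.sqrt 2)) +
      (1/2) * ∫ x in (0:ℝ)..(π/8),
        Real.sqrt (((π/8) / Real.sin (π/8)) / x + (1 + 2 / Real.sqrt (2 + Real.sqrt 2)))
      < -0.05 := by
  have hπ := Real.pi_pos
  have hπu : π < 3.1416 := by linarith [Real.pi_lt_d6]
  have h2pos : (0:ℝ) < Real.sqrt 2 := Real.sqrt_pos.mpr (by norm_num)
  have h2u : Real.sqrt 2 < 1.41422 := (Real.sqrt_lt' (by norm_num)).mpr (by norm_num)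
  have h2l : 1.41421 < Real.sqrt 2 := (Real.lt_sqrt (by norm_num)).mpr (by norm_num)
  -- sin (π/8) lower bound
  have hs2m : 0.76536 < Real.sqrt (2 - Real.sqrt 2) :=
    (Real.lt_sqrt (by norm_num)).mpr (by nlinarith)
  have hsin : (0.38268 : ℝ) < Real.sin (π/8) := by
    rw [Real.sin_pi_div_eight]; linarith
  have hsinpos : 0 < Real.sin (π/8) := by linarith
  -- √(2+√2) lower bound
  have hs2p : 1.8477 < Real.sqrt (2 + Real.sqrt 2) :=
    (Real.lt_sqrt (by norm_num)).mpr (by nlinarith)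
  have hs2ppos : 0 < Real.sqrt (2 + Real.sqrt 2) := by linarith
  -- main sqrt lower bound
  have hsl : (1.9564 : ℝ) < Real.sqrt (1 + 2 * Real.sqrt 2) :=
    (Real.lt_sqrt (by norm_num)).mpr (by nlinarith)
  -- first integral bound
  set c₁ : ℝ := π * Real.sqrt 2 / 4 with hc₁
  set b₁ : ℝ := 1 + Real.sqrt 2 with hb₁
  have hc₁pos : 0 < c₁ := by rw [hc₁]; positivity
  have hb₁pos : 0 < b₁ := by rw [hb₁]; positivity
  have hI1 : (∫ x in (0:ℝ)..(π/4), Real.sqrt (π * Real.sqrt 2 / (4 * x) + 1 + Real.sqrt 2))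
      ≤ 2 * Real.sqrt ((π/4) * (c₁ + b₁ * (π/4) / 3)) := by
    have e : ∀ x : ℝ, π * Real.sqrt 2 / (4 * x) + 1 + Real.sqrt 2 = c₁ / x + b₁ := by
      intro x; rw [hc₁, hb₁]; ring
    simp only [e]
    exact sqrt_div_integral_bound c₁ b₁ (π/4) hc₁pos hb₁pos (by positivity)
  -- second integral bound
  set c₂ : ℝ := (π/8) / Real.sin (π/8) with hc₂
  set b₂ : ℝ := 1 + 2 / Real.sqrt (2 + Real.sqrt 2) with hb₂
  have hc₂pos : 0 < c₂ := by rw [hc₂]; positivity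
  have hb₂pos : 0 < b₂ := by rw [hb₂]; positivity
  have hI2 : (∫ x in (0:ℝ)..(π/8),
        Real.sqrt (((π/8) / Real.sin (π/8)) / x + (1 + 2 / Real.sqrt (2 + Real.sqrt 2))))
      ≤ 2 * Real.sqrt ((π/8) * (c₂ + b₂ * (π/8) / 3)) :=
    sqrt_div_integral_bound c₂ b₂ (π/8) hc₂pos hb₂pos (by positivity)
  -- numeric bound on the first sqrt expression
  have hπ4 : π/4 < 0.7854 := by linarith
  have hc₁u : c₁ < 1.11074 := by
    rw [hc₁]
    linarith [mul_lt_mul'' hπu h2u hπ.le h2pos.le]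
  have hb₁π : b₁ * (π/4) < 2.41422 * 0.7854 :=
    mul_lt_mul'' (by rw [hb₁]; linarith) hπ4 (by positivity) (by positivity)
  have hin₁ : c₁ + b₁ * (π/4) / 3 < 1.74279 := by linarith
  have hin₁pos : 0 < c₁ + b₁ * (π/4) / 3 := by positivity
  have hX1 : Real.sqrt ((π/4) * (c₁ + b₁ * (π/4) / 3)) < 1.1701 := by
    rw [Real.sqrt_lt' (by norm_num)]
    linarith [mul_lt_mul'' hπ4 hin₁ (by positivity : (0:ℝ) ≤ π/4) hin₁pos.le]
  -- numeric bound on the second sqrt expression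
  have hπ8 : π/8 < 0.3927 := by linarith
  have hc₂u : c₂ < 1.0263 := by
    rw [hc₂, div_lt_iff₀ hsinpos]
    linarith
  have hb₂u : b₂ < 2.0825 := by
    rw [hb₂]
    have h : 2 / Real.sqrt (2 + Real.sqrt 2) < 1.0825 := by
      rw [div_lt_iff₀ hs2ppos]; linarith
    linarith
  have hb₂π : b₂ * (π/8) < 2.0825 * 0.3927 :=
    mul_lt_mul'' hb₂u hπ8 hb₂pos.le (by positivity)
  have hin₂ : c₂ + b₂ * (π/8) / 3 < 1.29891 := by linarith
  have hin₂pos : 0 < c₂ + b₂ * (π/8) / 3 := by positivity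
  have hX2 : Real.sqrt ((π/8) * (c₂ + b₂ * (π/8) / 3)) < 0.71421 := by
    rw [Real.sqrt_lt' (by norm_num)]
    linarith [mul_lt_mul'' hπ8 hin₂ (by positivity : (0:ℝ) ≤ π/8) hin₂pos.le]
  -- combine
  norm_num
  linarith [hI1, hI2, hX1, hX2, hsl]
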